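/- arXiv:1908.02403 — 3 statements merged into one kernel-verified Lean document; each statement's English description precedes it below -/
import Mathlib

section
/- In the logic DHMSH, for every set Γ of formulas and all formulas α, β, γ: Γ ⊢ (α →_H β) →_H ((β →_H γ) →_H (α →_H γ)). -/
/-- Propositional formulas over countably many variables in the language
`∧, ∨, →, ', ⊥, ⊤`. -/
inductive Fm : Type where
  | var : ℕ → Fm
  | bot : Fm
  | top : Fm
  | and : Fm → Fm → Fm
  | or : Fm → Fm → Fm
  | imp : Fm → Fm → Fm
  | neg : Fm → Fm

/-- The abbreviation `α →_H β := α → (α ∧ β)`. -/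
def hi (a b : Fm) : Fm := Fm.imp a (Fm.and a b)

/-- Derivability in the Hilbert-style logic `DHMSH` from a set `Γ` of premises:
axiom schemes (A1)–(A14) together with the rules (SMP) and (SCP). -/
inductive Deriv (Γ : Set Fm) : Fm → Prop where
  | hyp {φ : Fm} : φ ∈ Γ → Deriv Γ φ
  | a1 (α β : Fm) : Deriv Γ (hi α (Fm.or α β))
  | a2 (α β : Fm) : Deriv Γ (hi β (Fm.or α β))
  | a3 (α β γ : Fm) : Deriv Γ (hi (hi α γ) (hi (hi β γ) (hi (Fm.or α β) γ)))
  | a4 (α β : Fm) : Deriv Γ (hi (Fm.and α β) α)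
  | a5 (α β γ : Fm) : Deriv Γ (hi (hi γ α) (hi (hi γ β) (hi γ (Fm.and α β))))
  | a6 : Deriv Γ Fm.top
  | a7 (α : Fm) : Deriv Γ (hi Fm.bot α)
  | a8 (α β γ : Fm) : Deriv Γ (hi (hi (Fm.and α β) γ) (hi α (hi β γ)))
  | a9 (α β γ : Fm) : Deriv Γ (hi (hi α (hi β γ)) (hi (Fm.and α β) γ))
  | a10 (α β γ : Fm) :
      Deriv Γ (hi (hi α β) (hi (hi β α) (hi (Fm.imp α γ) (Fm.imp β γ))))
  | a11 (α β γ : Fm) :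
      Deriv Γ (hi (hi α β) (hi (hi β α) (hi (Fm.imp γ β) (Fm.imp γ α))))
  | a12 : Deriv Γ (hi Fm.top (Fm.neg Fm.bot))
  | a13 : Deriv Γ (hi (Fm.neg Fm.top) Fm.bot)
  | a14 (α β : Fm) : Deriv Γ (hi (Fm.neg (Fm.and α β)) (Fm.or (Fm.neg α) (Fm.neg β)))
  | smp {φ γ : Fm} : Deriv Γ φ → Deriv Γ (hi φ γ) → Deriv Γ γ
  | scp {φ γ : Fm} : Deriv Γ (hi φ γ) → Deriv Γ (hi (Fm.neg γ) (Fm.neg φ))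

namespace DhmshAux

open Fm

variable {Γ : Set Fm}

/-- K : `x →_H (y →_H x)`, from (A4) and (A8). -/
lemma dK (x y : Fm) : Deriv Γ (hi x (hi y x)) :=
  Deriv.smp (Deriv.a4 x y) (Deriv.a8 x y x)

/-- Weakening: from `⊢ θ` infer `⊢ a →_H θ`. -/
lemma wk (a : Fm) {θ : Fm} (h : Deriv Γ θ) : Deriv Γ (hi a θ) :=
  Deriv.smp h (dK θ a)

/-- Pairing rule, from (A5). -/
lemma pair {a x y : Fm} (h1 : Deriv Γ (hi a x)) (h2 : Deriv Γ (hi a y)) :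
    Deriv Γ (hi a (Fm.and x y)) :=
  Deriv.smp h2 (Deriv.smp h1 (Deriv.a5 x y a))

/-- Reflexivity: `⊢ a →_H a`. -/
lemma refl (a : Fm) : Deriv Γ (hi a a) := by
  have s3 : Deriv Γ (hi a Fm.top) := wk a Deriv.a6
  have s1 : Deriv Γ (hi (Fm.and a Fm.top) (Fm.and a a)) :=
    pair (Deriv.a4 a Fm.top) (Deriv.a4 a Fm.top)
  have s2 : Deriv Γ (hi (Fm.and a a) (Fm.and a Fm.top)) :=
    pair (Deriv.a4 a a) (wk _ Deriv.a6)
  have h11 := Deriv.a11 (Γ := Γ) (Fm.and a a) (Fm.and a Fm.top) a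
  -- h11 : hi s2-type (hi s1-type (hi (imp a (a ∧ ⊤)) (imp a (a ∧ a))))
  have h := Deriv.smp s1 (Deriv.smp s2 h11)
  exact Deriv.smp s3 h

/-- Second projection: `⊢ (a ∧ b) →_H b`. -/
lemma proj2 (a b : Fm) : Deriv Γ (hi (Fm.and a b) b) :=
  Deriv.smp (wk a (refl b)) (Deriv.a9 a b b)

/-- Left weakening: from `⊢ x →_H y` infer `⊢ (z ∧ x) →_H y`. -/
lemma leftweak (z : Fm) {x y : Fm} (h : Deriv Γ (hi x y)) :
    Deriv Γ (hi (Fm.and z x) y) :=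
  Deriv.smp (wk z h) (Deriv.a9 z x y)

/-- Codomain transport: from `⊢ a →_H X` and `X ⊣⊢ Y` infer `⊢ a →_H Y`. -/
lemma ct {a X Y : Fm} (h : Deriv Γ (hi a X)) (hxy : Deriv Γ (hi X Y))
    (hyx : Deriv Γ (hi Y X)) : Deriv Γ (hi a Y) := by
  have e1 : Deriv Γ (hi (Fm.and a X) (Fm.and a Y)) :=
    pair (Deriv.a4 a X) (leftweak a hxy)
  have e2 : Deriv Γ (hi (Fm.and a Y) (Fm.and a X)) :=
    pair (Deriv.a4 a Y) (leftweak a hyx)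
  have h11 := Deriv.a11 (Γ := Γ) (Fm.and a Y) (Fm.and a X) a
  exact Deriv.smp h (Deriv.smp e1 (Deriv.smp e2 h11))

/-- Domain transport: from `⊢ x' →_H θ` and `x ⊣⊢ x'` infer `⊢ x →_H θ`. -/
lemma dt {x x' θ : Fm} (h : Deriv Γ (hi x' θ)) (hxx' : Deriv Γ (hi x x'))
    (hx'x : Deriv Γ (hi x' x)) : Deriv Γ (hi x θ) := by
  have c1 : Deriv Γ (hi (Fm.and x θ) x') := ct (Deriv.a4 x θ) hxx' hx'x
  have c2 : Deriv Γ (hi (Fm.and x' θ) x) := ct (Deriv.a4 x' θ) hx'x hxx'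
  have e1 : Deriv Γ (hi (Fm.and x θ) (Fm.and x' θ)) := pair c1 (proj2 x θ)
  have e2 : Deriv Γ (hi (Fm.and x' θ) (Fm.and x θ)) := pair c2 (proj2 x' θ)
  have h10 := Deriv.a10 (Γ := Γ) x' x (Fm.and x' θ)
  have step1 : Deriv Γ (Fm.imp x (Fm.and x' θ)) :=
    Deriv.smp h (Deriv.smp hxx' (Deriv.smp hx'x h10))
  have h11 := Deriv.a11 (Γ := Γ) (Fm.and x θ) (Fm.and x' θ) x
  exact Deriv.smp step1 (Deriv.smp e2 (Deriv.smp e1 h11))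

/-- Projection through: from `⊢ X →_H (α ∧ β)` infer `⊢ X →_H β`. -/
lemma projR {X α β : Fm} (h : Deriv Γ (hi X (Fm.and α β))) :
    Deriv Γ (hi X β) :=
  dt (leftweak X (proj2 α β)) (pair (refl X) h) (Deriv.a4 X (Fm.and α β))

/-- Composition (transitivity rule). -/
lemma comp {X Y θ : Fm} (h1 : Deriv Γ (hi X Y)) (h2 : Deriv Γ (hi Y θ)) :
    Deriv Γ (hi X θ) :=
  projR (ct h1 (pair (refl Y) h2) (Deriv.a4 Y θ))

/-- Internal modus ponens: `⊢ ((a →_H b) ∧ a) →_H b`. -/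
lemma impE (a b : Fm) : Deriv Γ (hi (Fm.and (hi a b) a) b) :=
  Deriv.smp (refl (hi a b)) (Deriv.a9 (hi a b) a b)

end DhmshAux

/-- In `DHMSH`: `Γ ⊢ (α →_H β) →_H ((β →_H γ) →_H (α →_H γ))`. -/
theorem dhmsh_transitivity :
    ∀ (Γ : Set Fm) (α β γ : Fm),
      Deriv Γ (hi (hi α β) (hi (hi β γ) (hi α γ))) := by
  intro Γ α β γ
  open DhmshAux in
  let P := hi α β
  let Q := hi β γ
  have t1 : Deriv Γ (hi (Fm.and (Fm.and P Q) α) (Fm.and P Q)) :=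
    Deriv.a4 (Fm.and P Q) α
  have t2 : Deriv Γ (hi (Fm.and (Fm.and P Q) α) P) :=
    DhmshAux.comp t1 (Deriv.a4 P Q)
  have t3 : Deriv Γ (hi (Fm.and (Fm.and P Q) α) Q) :=
    DhmshAux.comp t1 (DhmshAux.proj2 P Q)
  have t4 : Deriv Γ (hi (Fm.and (Fm.and P Q) α) α) :=
    DhmshAux.proj2 (Fm.and P Q) α
  have t6 : Deriv Γ (hi (Fm.and (Fm.and P Q) α) β) :=
    DhmshAux.comp (DhmshAux.pair t2 t4) (DhmshAux.impE α β)
  have t8 : Deriv Γ (hi (Fm.and (Fm.and P Q) α) γ) :=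
    DhmshAux.comp (DhmshAux.pair t3 t6) (DhmshAux.impE β γ)
  have t9 : Deriv Γ (hi (Fm.and P Q) (hi α γ)) :=
    Deriv.smp t8 (Deriv.a8 (Fm.and P Q) α γ)
  exact Deriv.smp t9 (Deriv.a8 P Q (hi α γ))
end

section
/- In the logic DHMSH, for every set Γ of formulas and all formulas α, β: Γ ⊢ (α ∨ β)' →_H (α' ∧ β'). -/
/-- In `DHMSH`: `Γ ⊢ (α ∨ β)' →_H (α' ∧ β')`. -/
theorem dhmsh_deMorgan_or_neg :
    ∀ (Γ : Set Fm) (α β : Fm),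
      Deriv Γ (hi (Fm.neg (Fm.or α β)) (Fm.and (Fm.neg α) (Fm.neg β))) := by
  intro Γ α β
  have h1 : Deriv Γ (hi (Fm.neg (Fm.or α β)) (Fm.neg α)) := Deriv.scp (Deriv.a1 α β)
  have h2 : Deriv Γ (hi (Fm.neg (Fm.or α β)) (Fm.neg β)) := Deriv.scp (Deriv.a2 α β)
  exact Deriv.smp h2 (Deriv.smp h1 (Deriv.a5 _ _ _))
end

section
/- Characterization of the Deduction Property: let Δ be a set of formulas and consider the axiomatic extension DHMSH+Δ. The Deduction Property for →_H holds in DHMSH+Δ (i.e., for all Γ, α, β: Γ ∪ {α} ⊢_Δ β if and only if Γ ⊢_Δ α →_H β) if and only if ⊢_Δ (α →_H β) →_H (β' →_H α') for all formulas α, β. -/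
/-- Substitution of formulas for variables. -/
def Fm.subst (σ : ℕ → Fm) : Fm → Fm
  | Fm.var n => σ n
  | Fm.bot => Fm.bot
  | Fm.top => Fm.top
  | Fm.and a b => Fm.and (Fm.subst σ a) (Fm.subst σ b)
  | Fm.or a b => Fm.or (Fm.subst σ a) (Fm.subst σ b)
  | Fm.imp a b => Fm.imp (Fm.subst σ a) (Fm.subst σ b)
  | Fm.neg a => Fm.neg (Fm.subst σ a)

/-- Derivability from `Γ` in the axiomatic extension `DHMSH + Δ`: all substitution
instances of members of `Δ` are added as extra axioms to the calculus `DHMSH`. -/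
inductive DerivE (Δ : Set Fm) (Γ : Set Fm) : Fm → Prop where
  | axm {φ : Fm} (σ : ℕ → Fm) : φ ∈ Δ → DerivE Δ Γ (Fm.subst σ φ)
  | hyp {φ : Fm} : φ ∈ Γ → DerivE Δ Γ φ
  | a1 (α β : Fm) : DerivE Δ Γ (hi α (Fm.or α β))
  | a2 (α β : Fm) : DerivE Δ Γ (hi β (Fm.or α β))
  | a3 (α β γ : Fm) : DerivE Δ Γ (hi (hi α γ) (hi (hi β γ) (hi (Fm.or α β) γ)))
  | a4 (α β : Fm) : DerivE Δ Γ (hi (Fm.and α β) α)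
  | a5 (α β γ : Fm) : DerivE Δ Γ (hi (hi γ α) (hi (hi γ β) (hi γ (Fm.and α β))))
  | a6 : DerivE Δ Γ Fm.top
  | a7 (α : Fm) : DerivE Δ Γ (hi Fm.bot α)
  | a8 (α β γ : Fm) : DerivE Δ Γ (hi (hi (Fm.and α β) γ) (hi α (hi β γ)))
  | a9 (α β γ : Fm) : DerivE Δ Γ (hi (hi α (hi β γ)) (hi (Fm.and α β) γ))
  | a10 (α β γ : Fm) :
      DerivE Δ Γ (hi (hi α β) (hi (hi β α) (hi (Fm.imp α γ) (Fm.imp β γ))))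
  | a11 (α β γ : Fm) :
      DerivE Δ Γ (hi (hi α β) (hi (hi β α) (hi (Fm.imp γ β) (Fm.imp γ α))))
  | a12 : DerivE Δ Γ (hi Fm.top (Fm.neg Fm.bot))
  | a13 : DerivE Δ Γ (hi (Fm.neg Fm.top) Fm.bot)
  | a14 (α β : Fm) : DerivE Δ Γ (hi (Fm.neg (Fm.and α β)) (Fm.or (Fm.neg α) (Fm.neg β)))
  | smp {φ γ : Fm} : DerivE Δ Γ φ → DerivE Δ Γ (hi φ γ) → DerivE Δ Γ γ
  | scp {φ γ : Fm} : DerivE Δ Γ (hi φ γ) → DerivE Δ Γ (hi (Fm.neg γ) (Fm.neg φ))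

namespace DHMSH

variable {Δ Γ Γ' : Set Fm}

/-- Monotonicity in the hypothesis set. -/
theorem mono (h : DerivE Δ Γ φ) (hs : Γ ⊆ Γ') : DerivE Δ Γ' φ := by
  induction h with
  | axm σ h => exact DerivE.axm σ h
  | hyp h => exact DerivE.hyp (hs h)
  | a1 a b => exact DerivE.a1 a b
  | a2 a b => exact DerivE.a2 a b
  | a3 a b c => exact DerivE.a3 a b c
  | a4 a b => exact DerivE.a4 a b
  | a5 a b c => exact DerivE.a5 a b c
  | a6 => exact DerivE.a6
  | a7 a => exact DerivE.a7 a
  | a8 a b c => exact DerivE.a8 a b c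
  | a9 a b c => exact DerivE.a9 a b c
  | a10 a b c => exact DerivE.a10 a b c
  | a11 a b c => exact DerivE.a11 a b c
  | a12 => exact DerivE.a12
  | a13 => exact DerivE.a13
  | a14 a b => exact DerivE.a14 a b
  | smp _ _ ih1 ih2 => exact DerivE.smp ih1 ih2
  | scp _ ih => exact DerivE.scp ih

/-- K combinator: `⊢ a →H (b →H a)`. -/
theorem k (a b : Fm) : DerivE Δ Γ (hi a (hi b a)) :=
  DerivE.smp (DerivE.a4 a b) (DerivE.a8 a b a)

/-- Lifting: from `⊢ t` infer `⊢ b →H t`. -/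
theorem lift (b : Fm) (h : DerivE Δ Γ t) : DerivE Δ Γ (hi b t) :=
  DerivE.smp h (k t b)

/-- `⊢ b →H ⊤`. -/
theorem ttop (b : Fm) : DerivE Δ Γ (hi b Fm.top) :=
  DerivE.smp DerivE.a6 (k Fm.top b)

/-- Pairing rule: from `c →H a` and `c →H b` infer `c →H (a ∧ b)`. -/
theorem pairR (h1 : DerivE Δ Γ (hi c a)) (h2 : DerivE Δ Γ (hi c b)) :
    DerivE Δ Γ (hi c (Fm.and a b)) :=
  DerivE.smp h2 (DerivE.smp h1 (DerivE.a5 a b c))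

/-- Uncurrying rule. -/
theorem uncurry (h : DerivE Δ Γ (hi a (hi b c))) : DerivE Δ Γ (hi (Fm.and a b) c) :=
  DerivE.smp h (DerivE.a9 a b c)

/-- Identity: `⊢ a →H a`. -/
theorem idd (a : Fm) : DerivE Δ Γ (hi a a) := by
  have l1 : DerivE Δ Γ (hi (Fm.and a Fm.top) (Fm.and a a)) :=
    pairR (DerivE.a4 a Fm.top) (DerivE.a4 a Fm.top)
  have l2 : DerivE Δ Γ (hi (Fm.and a a) (Fm.and a Fm.top)) :=
    pairR (DerivE.a4 a a) (ttop _)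
  have step : DerivE Δ Γ (hi (Fm.imp a (Fm.and a Fm.top)) (Fm.imp a (Fm.and a a))) :=
    DerivE.smp l1 (DerivE.smp l2 (DerivE.a11 (Fm.and a a) (Fm.and a Fm.top) a))
  exact DerivE.smp (ttop a) step

/-- Second projection: `⊢ (a ∧ b) →H b`. -/
theorem proj2 (a b : Fm) : DerivE Δ Γ (hi (Fm.and a b) b) :=
  uncurry (lift a (idd b))

/-- Right ∧-congruence (one direction). -/
theorem congR (z : Fm) (h : DerivE Δ Γ (hi u v)) :
    DerivE Δ Γ (hi (Fm.and z u) (Fm.and z v)) :=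
  pairR (DerivE.a4 z u) (uncurry (lift z h))

/-- Consequent replacement along an →H-equivalence. -/
theorem cp (h1 : DerivE Δ Γ (hi b' a')) (h2 : DerivE Δ Γ (hi a' b'))
    (h3 : DerivE Δ Γ (Fm.imp g b')) : DerivE Δ Γ (Fm.imp g a') :=
  DerivE.smp h3 (DerivE.smp h1 (DerivE.smp h2 (DerivE.a11 a' b' g)))

/-- Antecedent replacement along an →H-equivalence. -/
theorem ap (h1 : DerivE Δ Γ (hi x y)) (h2 : DerivE Δ Γ (hi y x))
    (h3 : DerivE Δ Γ (Fm.imp x c)) : DerivE Δ Γ (Fm.imp y c) :=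
  DerivE.smp h3 (DerivE.smp h2 (DerivE.smp h1 (DerivE.a10 x y c)))

/-- Transitivity of `→H`. -/
theorem trans (h1 : DerivE Δ Γ (hi a b)) (h2 : DerivE Δ Γ (hi b c)) :
    DerivE Δ Γ (hi a c) := by
  have e1 : DerivE Δ Γ (hi a (Fm.and a b)) := pairR (idd a) h1
  have h3 : DerivE Δ Γ (hi (Fm.and a b) c) := uncurry (lift a h2)
  -- iv : a → ((a∧b)∧c)
  have iv : DerivE Δ Γ (Fm.imp a (Fm.and (Fm.and a b) c)) :=
    ap (DerivE.a4 a b) e1 h3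
  -- p1 : ((a∧b)∧c) →H a
  have p1 : DerivE Δ Γ (hi (Fm.and (Fm.and a b) c) a) :=
    cp (congR _ (DerivE.a4 a b)) (congR _ e1) (DerivE.a4 (Fm.and a b) c)
  have dir1 : DerivE Δ Γ (hi (Fm.and (Fm.and a b) c) (Fm.and a c)) :=
    pairR p1 (proj2 _ c)
  -- t5 : (a∧c) →H (a∧b)
  have t5 : DerivE Δ Γ (hi (Fm.and a c) (Fm.and a b)) :=
    cp (congR _ e1) (congR _ (DerivE.a4 a b)) (DerivE.a4 a c)
  have dir2 : DerivE Δ Γ (hi (Fm.and a c) (Fm.and (Fm.and a b) c)) :=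
    pairR t5 (proj2 a c)
  exact cp dir1 dir2 iv

/-- The "S"-style rule. -/
theorem d3 (h1 : DerivE Δ Γ (hi α φ)) (h2 : DerivE Δ Γ (hi α (hi φ γ))) :
    DerivE Δ Γ (hi α γ) :=
  trans (pairR (idd α) h1) (uncurry h2)

/-- The deduction theorem, given the internalized contraposition schema. -/
theorem ded (θ : ∀ a b : Fm, DerivE Δ ∅ (hi (hi a b) (hi (Fm.neg b) (Fm.neg a))))
    {α β : Fm} (h : DerivE Δ (Γ ∪ {α}) β) : DerivE Δ Γ (hi α β) := by
  induction h with
  | axm σ h => exact lift α (DerivE.axm σ h)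
  | hyp h =>
      rcases h with h | h
      · exact lift α (DerivE.hyp h)
      · rw [Set.mem_singleton_iff] at h; rw [h]; exact idd α
  | a1 a b => exact lift α (DerivE.a1 a b)
  | a2 a b => exact lift α (DerivE.a2 a b)
  | a3 a b c => exact lift α (DerivE.a3 a b c)
  | a4 a b => exact lift α (DerivE.a4 a b)
  | a5 a b c => exact lift α (DerivE.a5 a b c)
  | a6 => exact lift α DerivE.a6
  | a7 a => exact lift α (DerivE.a7 a)
  | a8 a b c => exact lift α (DerivE.a8 a b c)
  | a9 a b c => exact lift α (DerivE.a9 a b c)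
  | a10 a b c => exact lift α (DerivE.a10 a b c)
  | a11 a b c => exact lift α (DerivE.a11 a b c)
  | a12 => exact lift α DerivE.a12
  | a13 => exact lift α DerivE.a13
  | a14 a b => exact lift α (DerivE.a14 a b)
  | smp _ _ ih1 ih2 => exact d3 ih1 ih2
  | @scp φ γ _ ih =>
      exact d3 ih (lift α (mono (θ φ γ) (Set.empty_subset Γ)))

end DHMSH

/-- The Deduction Property for `→_H` holds in the axiomatic extension `DHMSH + Δ`
iff `⊢_Δ (α →_H β) →_H (β' →_H α')` for all formulas `α, β`. -/
theorem deduction_property_characterization (Δ : Set Fm) :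
    (∀ (Γ : Set Fm) (α β : Fm), DerivE Δ (Γ ∪ {α}) β ↔ DerivE Δ Γ (hi α β)) ↔
      (∀ α β : Fm, DerivE Δ ∅ (hi (hi α β) (hi (Fm.neg β) (Fm.neg α)))) := by
  constructor
  · intro dp a b
    rw [← dp]
    rw [← dp]
    have h1 : DerivE Δ ((∅ ∪ {hi a b}) ∪ {Fm.neg b}) (hi a b) :=
      DerivE.hyp (Or.inl (Or.inr rfl))
    have h2 : DerivE Δ ((∅ ∪ {hi a b}) ∪ {Fm.neg b}) (Fm.neg b) :=
      DerivE.hyp (Or.inr rfl)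
    exact DerivE.smp h2 (DerivE.scp h1)
  · intro θ Γ α β
    constructor
    · exact DHMSH.ded θ
    · intro h
      exact DerivE.smp (DerivE.hyp (Or.inr rfl))
        (DHMSH.mono h (Set.subset_union_left))
end
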